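/- arXiv:1612.01758 — 2 statements merged into one kernel-verified Lean document; each statement's English description precedes it below -/
import Mathlib

section
/- Let G be a discrete group, H a separable complex Hilbert space, A a unital C*-subalgebra of B(H), and α : G → Aut(A) a group homomorphism into the *-automorphisms of A. If the C*-dynamical system (A,G,α) is weakly amenable with constant ≤ K, then the reduced crossed product A⋊_r G has the completely bounded approximation property with constant ≤ K. -/
open Filter
open scoped ENNReal

noncomputable section

namespace CP

/-- The operator on the ℓ²-direct sum `Kⁿ` induced by an `n × n` matrix of operators on `K`;
its operator norm is the C*-norm of the matrix as an element of `Mₙ(B(K))`. -/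
def matOp {K : Type*} [NormedAddCommGroup K] [InnerProductSpace ℂ K]
    {n : ℕ} (M : Matrix (Fin n) (Fin n) (K →L[ℂ] K)) :
    (PiLp 2 fun _ : Fin n => K) →L[ℂ] (PiLp 2 fun _ : Fin n => K) :=
  ((PiLp.continuousLinearEquiv 2 ℂ (fun _ : Fin n => K)).symm.toContinuousLinearMap).comp
    ((ContinuousLinearMap.pi fun p => ∑ q, (M p q).comp (ContinuousLinearMap.proj q)).comp
      ((PiLp.continuousLinearEquiv 2 ℂ (fun _ : Fin n => K)).toContinuousLinearMap))

/-- The linear map `S` is completely bounded on `D ⊆ B(K)` with cb-norm at most `C`: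
for every `n` and every `n × n` matrix with entries in `D`, the entrywise application of
`S` increases the norm in `Mₙ(B(K))` by a factor of at most `C`. -/
def CBBoundOn {K : Type*} [NormedAddCommGroup K] [InnerProductSpace ℂ K]
    (D : Set (K →L[ℂ] K)) (S : (K →L[ℂ] K) →ₗ[ℂ] (K →L[ℂ] K)) (C : ℝ) : Prop :=
  ∀ (n : ℕ) (M : Matrix (Fin n) (Fin n) (K →L[ℂ] K)),
    (∀ p q, M p q ∈ D) → ‖matOp (M.map S)‖ ≤ C * ‖matOp M‖

/-- A map `φ` on a (star-)subalgebra `A ⊆ B(H)` is completely bounded with cb-norm ≤ `C`. -/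
def CBBoundOnSub {H : Type*} [NormedAddCommGroup H] [InnerProductSpace ℂ H] [CompleteSpace H]
    (A : StarSubalgebra ℂ (H →L[ℂ] H)) (φ : A → A) (C : ℝ) : Prop :=
  ∀ (n : ℕ) (M : Matrix (Fin n) (Fin n) (H →L[ℂ] H)) (hM : ∀ p q, M p q ∈ A),
    ‖matOp (fun p q => (φ ⟨M p q, hM p q⟩ : H →L[ℂ] H))‖ ≤ C * ‖matOp M‖

/-- `ℓ²(G, H)`, the Hilbert space of square-summable `H`-valued families indexed by `G`. -/
abbrev L2 (G : Type*) (H : Type*) [NormedAddCommGroup H] [InnerProductSpace ℂ H] : Type _ :=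
  lp (fun _ : G => H) 2

variable {G : Type*} [Group G] {H : Type*} [NormedAddCommGroup H] [InnerProductSpace ℂ H]
  [CompleteSpace H]

/-- The reduced crossed product `A ⋊_r G`: the norm closure in `B(ℓ²(G,H))` of the linear
span of the operators `π(a) λ_t`. -/
def redCP (A : StarSubalgebra ℂ (H →L[ℂ] H))
    (π : A → (L2 G H →L[ℂ] L2 G H)) (lam : G → (L2 G H →L[ℂ] L2 G H)) :
    Set (L2 G H →L[ℂ] L2 G H) :=
  closure (Submodule.span ℂ {T | ∃ (a : A) (t : G), T = (π a).comp (lam t)} : Set _)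

/-- `F : G → B(A)` is a Herz–Schur `(A,G,α)`-multiplier with `‖F‖_HS ≤ C`. -/
def IsHSMultWith (A : StarSubalgebra ℂ (H →L[ℂ] H))
    (π : A → (L2 G H →L[ℂ] L2 G H)) (lam : G → (L2 G H →L[ℂ] L2 G H))
    (F : G → (A →L[ℂ] A)) (C : ℝ) : Prop :=
  ∃ S : (L2 G H →L[ℂ] L2 G H) →ₗ[ℂ] (L2 G H →L[ℂ] L2 G H),
    Set.MapsTo S (redCP A π lam) (redCP A π lam) ∧
    CBBoundOn (redCP A π lam) S C ∧
    ∀ (a : A) (t : G), S ((π a).comp (lam t)) = (π (F t a)).comp (lam t)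

/-- Weak amenability of the system `(A,G,α)` with constant ≤ `K`: a net of finitely
supported Herz–Schur multipliers, of finite-rank maps, with `‖F_i‖_HS ≤ K`, converging
pointwise in norm to the identity. -/
def SysWAWith (A : StarSubalgebra ℂ (H →L[ℂ] H))
    (π : A → (L2 G H →L[ℂ] L2 G H)) (lam : G → (L2 G H →L[ℂ] L2 G H)) (K : ℝ) : Prop :=
  ∃ (ι : Type) (pι : Preorder ι), Nonempty ι ∧
    (∀ i j : ι, ∃ k, pι.le i k ∧ pι.le j k) ∧
    ∃ F : ι → G → (A →L[ℂ] A),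
      (∀ i, (Function.support (F i)).Finite) ∧
      (∀ i, IsHSMultWith A π lam (F i) K) ∧
      (∀ i t, FiniteDimensional ℂ (LinearMap.range (F i t).toLinearMap)) ∧
      (∀ (t : G) (a : A), Filter.Tendsto (fun i => F i t a) (@Filter.atTop ι pι) (nhds a))

/-- The subset `D ⊆ B(K)` (a C*-algebra) has the completely bounded approximation
property with constant ≤ `C`. -/
def CBAPWith {K : Type*} [NormedAddCommGroup K] [InnerProductSpace ℂ K]
    (D : Set (K →L[ℂ] K)) (C : ℝ) : Prop :=
  ∃ (ι : Type) (pι : Preorder ι), Nonempty ι ∧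
    (∀ i j : ι, ∃ k, pι.le i k ∧ pι.le j k) ∧
    ∃ T : ι → ((K →L[ℂ] K) →ₗ[ℂ] (K →L[ℂ] K)),
      (∀ i, Set.MapsTo (T i) D D) ∧
      (∀ i, FiniteDimensional ℂ (Submodule.span ℂ (T i '' D))) ∧
      (∀ i, CBBoundOn D (T i) C) ∧
      (∀ x ∈ D, Filter.Tendsto (fun i => T i x) (@Filter.atTop ι pι) (nhds x))

/-- The reduced group C*-algebra `C*_r(G) ⊆ B(ℓ²(G))`: closure of the span of the
left translations. -/
def grpCstar (lamG : G → (L2 G ℂ →L[ℂ] L2 G ℂ)) : Set (L2 G ℂ →L[ℂ] L2 G ℂ) :=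
  closure (Submodule.span ℂ (Set.range lamG) : Set _)

/-- `u : G → ℂ` is a Herz–Schur multiplier of `G` with cb-norm ≤ `C`. -/
def IsGrpMultWith (lamG : G → (L2 G ℂ →L[ℂ] L2 G ℂ)) (u : G → ℂ) (C : ℝ) : Prop :=
  ∃ S : (L2 G ℂ →L[ℂ] L2 G ℂ) →ₗ[ℂ] (L2 G ℂ →L[ℂ] L2 G ℂ),
    Set.MapsTo S (grpCstar lamG) (grpCstar lamG) ∧
    CBBoundOn (grpCstar lamG) S C ∧
    ∀ t : G, S (lamG t) = u t • lamG t

/-- The group `G` is weakly amenable with constant ≤ `C`. -/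
def GrpWAWith (lamG : G → (L2 G ℂ →L[ℂ] L2 G ℂ)) (C : ℝ) : Prop :=
  ∃ (ι : Type) (pι : Preorder ι), Nonempty ι ∧
    (∀ i j : ι, ∃ k, pι.le i k ∧ pι.le j k) ∧
    ∃ u : ι → G → ℂ,
      (∀ i, (Function.support (u i)).Finite) ∧
      (∀ i, IsGrpMultWith lamG (u i) C) ∧
      (∀ t : G, Filter.Tendsto (fun i => u i t) (@Filter.atTop ι pι) (nhds 1))

end CP

open CP

set_option synthInstance.maxHeartbeats 1000000
set_option maxHeartbeats 2000000

lemma l2_norm_le {G : Type*} {H : Type*} [NormedAddCommGroup H] [InnerProductSpace ℂ H]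
    (ξ η : lp (fun _ : G => H) 2) (c : ℝ) (hc : 0 ≤ c) (e : G ≃ G)
    (h : ∀ r, ‖η r‖ ≤ c * ‖ξ (e r)‖) : ‖η‖ ≤ c * ‖ξ‖ := by
  have hp : (0:ℝ) < (2:ℝ≥0∞).toReal := by norm_num
  have hη := lp.norm_rpow_eq_tsum hp η
  have hξ := lp.norm_rpow_eq_tsum hp ξ
  have hsη : Summable (fun r => ‖η r‖ ^ (2:ℝ≥0∞).toReal) := (lp.memℓp η).summable hp
  have hsξ : Summable (fun r => ‖ξ r‖ ^ (2:ℝ≥0∞).toReal) := (lp.memℓp ξ).summable hp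
  have hsξe : Summable (fun r => ‖ξ (e r)‖ ^ (2:ℝ≥0∞).toReal) := (e.summable_iff).2 hsξ
  have key : ‖η‖ ^ (2:ℝ≥0∞).toReal ≤ (c * ‖ξ‖) ^ (2:ℝ≥0∞).toReal := by
    calc ‖η‖ ^ (2:ℝ≥0∞).toReal = ∑' r, ‖η r‖ ^ (2:ℝ≥0∞).toReal := hη
      _ ≤ ∑' r, c ^ (2:ℝ≥0∞).toReal * ‖ξ (e r)‖ ^ (2:ℝ≥0∞).toReal := by
          refine Summable.tsum_le_tsum (fun r => ?_) hsη (hsξe.mul_left _)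
          rw [← Real.mul_rpow hc (norm_nonneg _)]
          exact Real.rpow_le_rpow (norm_nonneg _) (h r) hp.le
      _ = c ^ (2:ℝ≥0∞).toReal * ∑' r, ‖ξ (e r)‖ ^ (2:ℝ≥0∞).toReal := tsum_mul_left
      _ = c ^ (2:ℝ≥0∞).toReal * ∑' r, ‖ξ r‖ ^ (2:ℝ≥0∞).toReal := by
          rw [e.tsum_eq (f := fun r => ‖ξ r‖ ^ (2:ℝ≥0∞).toReal)]
      _ = c ^ (2:ℝ≥0∞).toReal * ‖ξ‖ ^ (2:ℝ≥0∞).toReal := by rw [hξ]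
      _ = (c * ‖ξ‖) ^ (2:ℝ≥0∞).toReal := (Real.mul_rpow hc (norm_nonneg ξ)).symm
  exact (Real.rpow_le_rpow_iff (norm_nonneg η) (mul_nonneg hc (norm_nonneg ξ)) hp).1 key

lemma matOp_apply {K : Type*} [NormedAddCommGroup K] [InnerProductSpace ℂ K]
    {n : ℕ} (M : Matrix (Fin n) (Fin n) (K →L[ℂ] K)) (ξ : PiLp 2 fun _ : Fin n => K) (p : Fin n) :
    matOp M ξ p = ∑ q, M p q (ξ q) := by
  simp [matOp, ContinuousLinearMap.pi_apply, ContinuousLinearMap.sum_apply]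

lemma piLp_one_norm {K : Type*} [NormedAddCommGroup K] [InnerProductSpace ℂ K]
    (x : PiLp 2 fun _ : Fin 1 => K) : ‖x‖ = ‖x 0‖ := by
  rw [PiLp.norm_eq_of_L2]
  simp [Real.sqrt_sq_eq_abs]

lemma matOp_one_norm {K : Type*} [NormedAddCommGroup K] [InnerProductSpace ℂ K]
    (M : Matrix (Fin 1) (Fin 1) (K →L[ℂ] K)) : ‖matOp M‖ = ‖M 0 0‖ := by
  apply le_antisymm
  · refine ContinuousLinearMap.opNorm_le_bound (matOp M) (norm_nonneg (M 0 0)) fun ξ => ?_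
    rw [piLp_one_norm (matOp M ξ), matOp_apply M ξ 0]
    simpa [piLp_one_norm ξ] using (M 0 0).le_opNorm (ξ 0)
  · refine ContinuousLinearMap.opNorm_le_bound (M 0 0) (norm_nonneg (matOp M)) fun v => ?_
    have h := (matOp M).le_opNorm ((PiLp.continuousLinearEquiv 2 ℂ (fun _ : Fin 1 => K)).symm
      (fun _ => v))
    rw [piLp_one_norm, matOp_apply] at h
    simpa [piLp_one_norm] using h

/-- If the C*-dynamical system `(A,G,α)` is weakly amenable with
constant ≤ K, then the reduced crossed product `A ⋊_r G` has the CBAP with constant ≤ K. -/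
theorem sysWA_implies_CBAP
    (G : Type*) [Group G]
    (H : Type*) [NormedAddCommGroup H] [InnerProductSpace ℂ H] [CompleteSpace H]
    [TopologicalSpace.SeparableSpace H]
    (A : StarSubalgebra ℂ (H →L[ℂ] H)) (hA : IsClosed (A : Set (H →L[ℂ] H)))
    (α : G → (A ≃⋆ₐ[ℂ] A))
    (hα1 : ∀ a : A, α 1 a = a)
    (hαm : ∀ (s t : G) (a : A), α (s * t) a = α s (α t a))
    (π : A → (L2 G H →L[ℂ] L2 G H))
    (lam : G → (L2 G H →L[ℂ] L2 G H))
    (hπ : ∀ (a : A) (ξ : L2 G H) (t : G),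
      (π a ξ) t = ((α t⁻¹ a : A) : H →L[ℂ] H) (ξ t))
    (hlam : ∀ (s : G) (ξ : L2 G H) (t : G), (lam s ξ) t = ξ (s⁻¹ * t))
    (K : ℝ)
    (hwa : SysWAWith A π lam K) :
    CBAPWith (redCP A π lam) K := by
  haveI : CStarAlgebra A := StarSubalgebra.cstarAlgebra A (h_closed := hA)
  have hnormcoe : ∀ b : A, ‖b‖ = ‖(b : H →L[ℂ] H)‖ := fun b => rfl
  have hπadd : ∀ a b : A, π (a + b) = π a + π b := by
    intro a b
    ext ξ r
    simp [hπ, lp.coeFn_add, ContinuousLinearMap.add_apply, map_add]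
  have hπsmul : ∀ (c : ℂ) (a : A), π (c • a) = c • π a := by
    intro c a
    ext ξ r
    simp [hπ, lp.coeFn_smul, ContinuousLinearMap.smul_apply, map_smul]
  set Φ : G → (A →ₗ[ℂ] (L2 G H →L[ℂ] L2 G H)) := fun t =>
    { toFun := fun a => (π a).comp (lam t)
      map_add' := fun a b => by
        show (π (a + b)).comp (lam t) = (π a).comp (lam t) + (π b).comp (lam t)
        rw [hπadd a b, ContinuousLinearMap.add_comp]
      map_smul' := fun c a => by
        show (π (c • a)).comp (lam t) = c • (π a).comp (lam t)
        rw [hπsmul c a, ContinuousLinearMap.smul_comp] }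
    with hΦ
  have hgen : ∀ (a : A) (t : G), ‖(π a).comp (lam t)‖ ≤ ‖a‖ := by
    intro a t
    refine ContinuousLinearMap.opNorm_le_bound _ (norm_nonneg _) fun ξ => ?_
    refine l2_norm_le ξ (((π a).comp (lam t)) ξ) _ (norm_nonneg _) (Equiv.mulLeft t⁻¹)
      fun r => ?_
    have h1 : (((π a).comp (lam t)) ξ) r = ((α r⁻¹ a : A) : H →L[ℂ] H) ((lam t ξ) r) := by
      rw [ContinuousLinearMap.comp_apply, hπ]
    have h2 : ‖((α r⁻¹ a : A) : H →L[ℂ] H)‖ = ‖a‖ := by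
      rw [← hnormcoe]
      exact StarAlgEquiv.norm_map (α r⁻¹) a
    rw [h1, hlam]
    calc ‖((α r⁻¹ a : A) : H →L[ℂ] H) (ξ (t⁻¹ * r))‖
        ≤ ‖((α r⁻¹ a : A) : H →L[ℂ] H)‖ * ‖ξ (t⁻¹ * r)‖ :=
          ContinuousLinearMap.le_opNorm _ _
      _ = ‖a‖ * ‖ξ ((Equiv.mulLeft t⁻¹) r)‖ := by rw [h2]; simp [Equiv.coe_mulLeft]
  obtain ⟨ι, pι, hne, hdir, F, hsupp, hmult, hfd, hconv⟩ := hwa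
  letI := pι
  haveI : Nonempty ι := hne
  haveI : IsDirected ι (· ≤ ·) := ⟨hdir⟩
  choose S hS1 hS2 hS3 using hmult
  set E : Set (L2 G H →L[ℂ] L2 G H) :=
    {T | ∃ (a : A) (t : G), T = (π a).comp (lam t)} with hE
  set DD : Submodule ℂ (L2 G H →L[ℂ] L2 G H) := (Submodule.span ℂ E).topologicalClosure with hDDdef
  have hDD : (DD : Set (L2 G H →L[ℂ] L2 G H)) = redCP A π lam :=
    Submodule.topologicalClosure_coe _
  -- norm bound for S i on the crossed product
  have hRedDD : ∀ z : L2 G H →L[ℂ] L2 G H, z ∈ redCP A π lam → z ∈ DD := by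
    intro z hz
    have : z ∈ (DD : Set (L2 G H →L[ℂ] L2 G H)) := by rw [hDD]; exact hz
    exact this
  have hDDRed : ∀ z : L2 G H →L[ℂ] L2 G H, z ∈ DD → z ∈ redCP A π lam := by
    intro z hz
    rw [← hDD]
    exact hz
  have hSb : ∀ (i : ι) (z : L2 G H →L[ℂ] L2 G H), z ∈ redCP A π lam →
      ‖S i z‖ ≤ |K| * ‖z‖ := by
    intro i z hz
    have h1 := hS2 i 1 (fun _ _ => z) (fun _ _ => hz)
    rw [matOp_one_norm] at h1
    have h1 := h1.trans_eq (congrArg (K * ·) (matOp_one_norm (fun _ _ => z : Matrix (Fin 1) (Fin 1) (L2 G H →L[ℂ] L2 G H))))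
    have h2 : (Matrix.map (fun _ _ => z) (S i) : Matrix (Fin 1) (Fin 1) _) 0 0 = S i z := rfl
    rw [h2] at h1
    exact h1.trans (mul_le_mul_of_nonneg_right (le_abs_self K) (norm_nonneg z))
  -- convergence on generators
  have hgenconv : ∀ (a : A) (t : G),
      Filter.Tendsto (fun i => S i ((π a).comp (lam t))) Filter.atTop
        (nhds ((π a).comp (lam t))) := by
    intro a t
    rw [tendsto_iff_norm_sub_tendsto_zero]
    have hb : ∀ i, ‖S i ((π a).comp (lam t)) - (π a).comp (lam t)‖ ≤ ‖F i t a - a‖ := by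
      intro i
      rw [hS3 i a t]
      have : (π (F i t a)).comp (lam t) - (π a).comp (lam t) = Φ t (F i t a - a) := by
        rw [map_sub]
        rfl
      rw [this]
      exact hgen _ t
    have hF : Filter.Tendsto (fun i => ‖F i t a - a‖) Filter.atTop (nhds 0) :=
      tendsto_iff_norm_sub_tendsto_zero.1 (hconv t a)
    exact squeeze_zero_norm (fun i => by simpa using hb i) hF
  -- convergence on the span
  have hspanconv : ∀ y ∈ Submodule.span ℂ E,
      Filter.Tendsto (fun i => S i y) Filter.atTop (nhds y) := by
    intro y hy
    induction hy using Submodule.span_induction with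
    | mem x hx =>
      obtain ⟨a, t, rfl⟩ := hx
      exact hgenconv a t
    | zero => simpa using tendsto_const_nhds
    | add x y hx hy hx' hy' => simpa [map_add] using hx'.add hy'
    | smul c x hx hx' => simpa [map_smul] using hx'.const_smul c
  refine ⟨ι, pι, hne, hdir, S, hS1, ?_, hS2, ?_⟩
  · -- finite dimensionality
    intro i
    classical
    set s : Finset G := (hsupp i).toFinset with hs
    set W : Submodule ℂ (L2 G H →L[ℂ] L2 G H) :=
      s.sup (fun t => Submodule.map (Φ t) (LinearMap.range (F i t).toLinearMap)) with hW
    haveI hWfd : FiniteDimensional ℂ W := by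
      haveI : ∀ t : G, FiniteDimensional ℂ
          (Submodule.map (Φ t) (LinearMap.range (F i t).toLinearMap)) := by
        intro t
        haveI := hfd i t
        exact Module.Finite.map _ _
      exact Submodule.finiteDimensional_finset_sup s _
    have hWclosed : IsClosed (W : Set (L2 G H →L[ℂ] L2 G H)) :=
      Submodule.closed_of_finiteDimensional W
    have hSE : ∀ z ∈ E, S i z ∈ W := by
      rintro z ⟨a, t, rfl⟩
      rw [hS3 i a t]
      by_cases ht : t ∈ s
      · have hmem : (π (F i t a)).comp (lam t) ∈
            Submodule.map (Φ t) (LinearMap.range (F i t).toLinearMap) :=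
          ⟨F i t a, ⟨a, rfl⟩, rfl⟩
        exact Finset.le_sup (f := fun t =>
          Submodule.map (Φ t) (LinearMap.range (F i t).toLinearMap)) ht hmem
      · have hz : F i t = 0 := by
          by_contra hcon
          exact ht ((hsupp i).mem_toFinset.2 hcon)
        have : (π (F i t a)).comp (lam t) = Φ t (F i t a) := rfl
        rw [this, hz]
        simpa using W.zero_mem
    have hspan : ∀ y ∈ Submodule.span ℂ E, S i y ∈ W := by
      intro y hy
      have hle : Submodule.span ℂ E ≤ W.comap (S i) :=
        Submodule.span_le.2 (fun z hz => hSE z hz)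
      exact hle hy
    have hD : ∀ x ∈ redCP A π lam, S i x ∈ W := by
      intro x hx
      have hx' : x ∈ closure ((Submodule.span ℂ E : Submodule ℂ _) :
          Set (L2 G H →L[ℂ] L2 G H)) := hx
      obtain ⟨u, humem, hulim⟩ := mem_closure_iff_seq_limit.1 hx'
      have hconv2 : Filter.Tendsto (fun n => S i (u n)) Filter.atTop (nhds (S i x)) := by
        rw [tendsto_iff_norm_sub_tendsto_zero]
        have hb : ∀ n, ‖S i (u n) - S i x‖ ≤ |K| * ‖u n - x‖ := by
          intro n
          rw [← map_sub]
          refine hSb i (u n - x) ?_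
          exact hDDRed _ (DD.sub_mem (Submodule.le_topologicalClosure _ (humem n))
            (hRedDD _ hx))
        have h0 : Filter.Tendsto (fun n => |K| * ‖u n - x‖) Filter.atTop (nhds 0) := by
          have := tendsto_iff_norm_sub_tendsto_zero.1 hulim
          simpa using this.const_mul |K|
        exact squeeze_zero_norm (fun n => by simpa using hb n) h0
      exact hWclosed.mem_of_tendsto hconv2
        (Filter.Eventually.of_forall fun n => hspan _ (humem n))
    have : Submodule.span ℂ (S i '' redCP A π lam) ≤ W := by
      refine Submodule.span_le.2 ?_
      rintro _ ⟨x, hx, rfl⟩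
      exact hD x hx
    exact Submodule.finiteDimensional_of_le this
  · -- pointwise convergence
    intro x hx
    rw [Metric.tendsto_nhds]
    intro ε hε
    have hKpos : (0:ℝ) < |K| + 2 := by positivity
    set δ : ℝ := ε / (|K| + 2) with hδ
    have hδpos : 0 < δ := div_pos hε hKpos
    have hx' : x ∈ closure ((Submodule.span ℂ E : Submodule ℂ _) :
        Set (L2 G H →L[ℂ] L2 G H)) := hx
    obtain ⟨y, hy, hxy⟩ := Metric.mem_closure_iff.1 hx' δ hδpos
    have h1 := Metric.tendsto_nhds.1 (hspanconv y hy) δ hδpos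
    filter_upwards [h1] with i hi
    have hxyD : x - y ∈ redCP A π lam :=
      hDDRed _ (DD.sub_mem (hRedDD _ hx) (Submodule.le_topologicalClosure _ hy))
    have hb : dist (S i x) (S i y) ≤ |K| * δ := by
      rw [dist_eq_norm, ← map_sub]
      calc ‖S i (x - y)‖ ≤ |K| * ‖x - y‖ := hSb i _ hxyD
        _ ≤ |K| * δ := by
            have : ‖x - y‖ ≤ δ := by
              rw [← dist_eq_norm]
              exact le_of_lt hxy
            exact mul_le_mul_of_nonneg_left this (abs_nonneg K)
    calc dist (S i x) x ≤ dist (S i x) (S i y) + dist (S i y) y + dist y x :=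
          dist_triangle4 _ _ _ _
      _ < |K| * δ + δ + δ := by
          have h3 : dist y x < δ := by rw [dist_comm]; exact hxy
          exact add_lt_add_of_le_of_lt (add_lt_add_of_le_of_lt hb hi).le h3
      _ = ε := by
          have h4 : |K| * δ + δ + δ = δ * (|K| + 2) := by ring
          rw [h4, hδ, div_mul_cancel₀ ε (ne_of_gt hKpos)]
end
end

section
/- Let G be a discrete group with identity e, H a complex Hilbert space, A a unital C*-subalgebra of B(H), and α : G → Aut(A) a group homomorphism. Define E : B(ℓ²(G,H)) → B(H) by E(T)v := (T(δ_e ⊗ v))(e), where δ_e ⊗ v ∈ ℓ²(G,H) is the family equal to v at e and 0 elsewhere. Then E is a unital, positive, contractive linear map; E(π(a)λ_t) = a when t = e and E(π(a)λ_t) = 0 when t ≠ e (for all a ∈ A, t ∈ G); and consequently E maps the reduced crossed product A⋊_r G into A. -/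
open Filter
open scoped ENNReal

noncomputable section

open CP

open scoped ComplexOrder

namespace CPAux

variable {G : Type*} [Group G] [DecidableEq G] {H : Type*} [NormedAddCommGroup H]
  [InnerProductSpace ℂ H] [CompleteSpace H]

omit [Group G] [InnerProductSpace ℂ H] [CompleteSpace H] in
lemma single_add (i : G) (a b : H) :
    lp.single (E := fun _ : G => H) 2 i (a + b) =
      lp.single 2 i a + lp.single 2 i b := by
  apply lp.ext
  funext j
  by_cases h : j = i
  · subst h; simp [lp.single_apply_self, lp.coeFn_add]
  · simp [lp.single_apply_ne _ _ _ h, lp.coeFn_add]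

/-- `v ↦ δ_e ⊗ v` as a continuous linear map. -/
noncomputable def singleCLM : H →L[ℂ] lp (fun _ : G => H) 2 :=
  LinearMap.mkContinuous
    { toFun := fun v => lp.single 2 (1 : G) v
      map_add' := fun a b => single_add 1 a b
      map_smul' := fun c v => by simpa using lp.single_smul 2 (1 : G) v c }
    1
    (fun v => by
      simpa using
        (lp.norm_single (p := 2) (by norm_num) (fun _ : G => v) (1 : G)).le)

/-- evaluation at the identity as a continuous linear map. -/
noncomputable def evalCLM : lp (fun _ : G => H) 2 →L[ℂ] H :=
  LinearMap.mkContinuous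
    { toFun := fun ξ => ξ (1 : G)
      map_add' := fun a b => by simp [lp.coeFn_add]
      map_smul' := fun c ξ => by simp [lp.coeFn_smul] }
    1
    (fun ξ => by rw [one_mul]; exact lp.norm_apply_le_norm two_ne_zero ξ (1 : G))

@[simp] lemma singleCLM_apply (v : H) :
    (singleCLM (G := G) v : lp (fun _ : G => H) 2) = lp.single 2 (1 : G) v := rfl

@[simp] lemma evalCLM_apply (ξ : lp (fun _ : G => H) 2) : evalCLM ξ = ξ (1 : G) := rfl

/-- The compression `T ↦ E(T)`, `E(T)v = (T(δ_e ⊗ v))(e)`, as a continuous linear map. -/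
noncomputable def Ec :
    ((lp (fun _ : G => H) 2) →L[ℂ] (lp (fun _ : G => H) 2)) →L[ℂ] (H →L[ℂ] H) :=
  ((ContinuousLinearMap.compL ℂ H (lp (fun _ : G => H) 2) H).flip singleCLM).comp
    (ContinuousLinearMap.compL ℂ (lp (fun _ : G => H) 2) (lp (fun _ : G => H) 2) H evalCLM)

lemma norm_Ec_le (T : (lp (fun _ : G => H) 2) →L[ℂ] (lp (fun _ : G => H) 2)) :
    ‖Ec T‖ ≤ ‖T‖ := by
  have h1 : Ec T = ((evalCLM.comp T).comp (singleCLM (G := G) (H := H))) := rfl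
  have hev : ‖(evalCLM : lp (fun _ : G => H) 2 →L[ℂ] H)‖ ≤ 1 :=
    LinearMap.mkContinuous_norm_le _ zero_le_one _
  have hsi : ‖(singleCLM : H →L[ℂ] lp (fun _ : G => H) 2)‖ ≤ 1 :=
    LinearMap.mkContinuous_norm_le _ zero_le_one _
  have h2 : ‖Ec T‖ ≤ ‖evalCLM.comp T‖ * ‖(singleCLM : H →L[ℂ] lp (fun _ : G => H) 2)‖ := by
    rw [h1]; exact ContinuousLinearMap.opNorm_comp_le _ _
  have h3 : ‖evalCLM.comp T‖ ≤ ‖(evalCLM : lp (fun _ : G => H) 2 →L[ℂ] H)‖ * ‖T‖ :=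
    ContinuousLinearMap.opNorm_comp_le _ _
  have n1 : (0:ℝ) ≤ ‖evalCLM.comp T‖ := ContinuousLinearMap.opNorm_nonneg _
  have n2 : (0:ℝ) ≤ ‖(singleCLM : H →L[ℂ] lp (fun _ : G => H) 2)‖ := ContinuousLinearMap.opNorm_nonneg _
  have n3 : (0:ℝ) ≤ ‖T‖ := ContinuousLinearMap.opNorm_nonneg _
  nlinarith

lemma Ec_apply (T : (lp (fun _ : G => H) 2) →L[ℂ] (lp (fun _ : G => H) 2)) (v : H) :
    Ec T v = (T (lp.single 2 (1 : G) v)) (1 : G) := rfl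

end CPAux


set_option maxHeartbeats 1000000 in
/-- The compression `E(T) v = (T (δ_e ⊗ v))(e)` is a unital, positive,
contractive linear map `B(ℓ²(G,H)) → B(H)` sending `π(a)λ_t` to `a` if `t = e` and to `0`
otherwise; consequently it maps the reduced crossed product into `A`. -/
theorem conditional_expectation_exists
    (G : Type*) [Group G] [DecidableEq G]
    (H : Type*) [NormedAddCommGroup H] [InnerProductSpace ℂ H] [CompleteSpace H]
    (A : StarSubalgebra ℂ (H →L[ℂ] H)) (hA : IsClosed (A : Set (H →L[ℂ] H)))
    (α : G → (A ≃⋆ₐ[ℂ] A))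
    (hα1 : ∀ a : A, α 1 a = a)
    (hαm : ∀ (s t : G) (a : A), α (s * t) a = α s (α t a))
    (π : A → (L2 G H →L[ℂ] L2 G H))
    (lam : G → (L2 G H →L[ℂ] L2 G H))
    (hπ : ∀ (a : A) (ξ : L2 G H) (t : G),
      (π a ξ) t = ((α t⁻¹ a : A) : H →L[ℂ] H) (ξ t))
    (hlam : ∀ (s : G) (ξ : L2 G H) (t : G), (lam s ξ) t = ξ (s⁻¹ * t)) :
    ∃ E : (L2 G H →L[ℂ] L2 G H) →ₗ[ℂ] (H →L[ℂ] H),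
      -- the defining formula `E(T) v = (T (δ_e ⊗ v))(e)`:
      (∀ (T : L2 G H →L[ℂ] L2 G H) (v : H), E T v = (T (lp.single 2 (1 : G) v)) (1 : G)) ∧
      -- unital:
      E (ContinuousLinearMap.id ℂ (L2 G H)) = ContinuousLinearMap.id ℂ H ∧
      -- positive:
      (∀ T : L2 G H →L[ℂ] L2 G H, T.IsPositive → (E T).IsPositive) ∧
      -- contractive:
      (∀ T : L2 G H →L[ℂ] L2 G H, ‖E T‖ ≤ ‖T‖) ∧
      -- values on the generators:
      (∀ (a : A) (t : G),
        E ((π a).comp (lam t)) = if t = 1 then (a : H →L[ℂ] H) else 0) ∧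
      -- maps the reduced crossed product into `A`:
      Set.MapsTo E (redCP A π lam) (A : Set (H →L[ℂ] H))  := by
  classical
  set Ec := CPAux.Ec (G := G) (H := H) with hEcdef
  have hform : ∀ (T : L2 G H →L[ℂ] L2 G H) (v : H),
      Ec T v = (T (lp.single 2 (1 : G) v)) (1 : G) := fun T v => rfl
  have hinner : ∀ (T : L2 G H →L[ℂ] L2 G H) (v : H),
      (inner ℂ (Ec T v) v : ℂ) =
        inner ℂ (T (lp.single 2 (1 : G) v)) (lp.single 2 (1 : G) v) := by
    intro T v
    rw [hform, lp.inner_single_right]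
  have hgen : ∀ (a : A) (t : G),
      Ec ((π a).comp (lam t)) = if t = 1 then (a : H →L[ℂ] H) else 0 := by
    intro a t
    ext v
    rw [hform]
    simp only [ContinuousLinearMap.comp_apply]
    rw [hπ, hlam]
    by_cases ht : t = 1
    · subst ht
      rw [if_pos rfl]
      rw [show ((1 : G)⁻¹ * 1 : G) = 1 by group, lp.single_apply_self, inv_one, hα1]
    · rw [if_neg ht]
      rw [show ((t⁻¹ * 1 : G)) = t⁻¹ by group,
        lp.single_apply_ne _ _ _ (by simpa [inv_eq_one] using ht), map_zero]
      simp
  refine ⟨Ec.toLinearMap, hform, ?_, ?_, ?_, hgen, ?_⟩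
  · -- unital
    ext v
    rw [ContinuousLinearMap.coe_coe, hform]
    simp [lp.single_apply_self]
  · -- positive
    intro T hT
    rw [ContinuousLinearMap.isPositive_iff_complex] at hT ⊢
    intro v
    rw [ContinuousLinearMap.coe_coe, hinner]
    exact hT _
  · -- contractive
    exact fun T => CPAux.norm_Ec_le T
  · -- maps redCP into A
    have hspan : Set.MapsTo Ec
        (Submodule.span ℂ {T | ∃ (a : A) (t : G), T = (π a).comp (lam t)} : Set _)
        (A : Set (H →L[ℂ] H)) := by
      intro T hT
      induction hT using Submodule.span_induction with
      | mem T hTm =>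
        obtain ⟨a, t, rfl⟩ := hTm
        rw [hgen]
        split
        · exact a.2
        · exact A.zero_mem
      | zero => rw [map_zero]; exact A.zero_mem
      | add x y _ _ hx hy => rw [map_add]; exact A.add_mem hx hy
      | smul c x _ hx => rw [map_smul]; exact SMulMemClass.smul_mem c hx
    intro T hT
    have := (hspan.closure Ec.continuous) hT
    rwa [hA.closure_eq] at this
end
end
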